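/- arXiv:2308.05445 — 2 statements merged into one kernel-verified Lean document; each statement's English description precedes it below -/
import Mathlib

section
/- Under the heterogeneous GRR/IPQ setup: for every x > 0, every k ≥ 1, and every θ₀ > 0 satisfying Σ_{j=1}^η (d̃/d_j) α_j Λ(θ₀) − d̃ θ₀ b < 0, there exists a constant c' > 0, independent of n, such that for every admissible n the age violation probability of the k-th update of source (g,i) satisfies Pr( A ≥ n x ) ≤ (d̃ c' + 1) · exp( −n · min_{0 ≤ ℓ' ≤ k'} γ^{U,ℓ'}(x) ). -/
open MeasureTheory ProbabilityTheory Real Filter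

/-- Admissibility of a system size `n`: `n ≥ 1`, every `α g * n` is a natural number,
and `m * n` is a natural number. -/
def GRRAdmissible {η : ℕ} (α : Fin η → ℝ) (m : ℝ) (n : ℕ) : Prop :=
  1 ≤ n ∧ (∀ g : Fin η, ∃ j : ℕ, (j : ℝ) = α g * n) ∧ ∃ j : ℕ, (j : ℝ) = m * n

/-- The upper rate functions `γ^{U,ℓ'}(x)` of Theorem 1 (heterogeneous GRR/IPQ):
`γ^{U,0}(x) = sup_{θ>0} {θ(x - d_g b) - m Λ(θ)}` and, for `ℓ' ≥ 1`,
`γ^{U,ℓ'}(x) = ℓ' ⬝ sup_{θ>0} {θ(x/ℓ' + ((ℓ'-1)d̃ - d_g)b/ℓ') - (Σ_j (d̃/d_j)α_j + m/ℓ') Λ(θ)}`. -/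
noncomputable def gammaU {η : ℕ} (d : Fin η → ℕ) (dt : ℕ) (α : Fin η → ℝ) (b m : ℝ)
    (Λ : ℝ → ℝ) (gi : Fin η) (x : ℝ) (ℓ' : ℕ) : ℝ :=
  if ℓ' = 0 then
    sSup {z : ℝ | ∃ θ > 0, z = θ * (x - (d gi : ℝ) * b) - m * Λ θ}
  else
    (ℓ' : ℝ) * sSup {z : ℝ | ∃ θ > 0,
      z = θ * (x / (ℓ' : ℝ) + (((ℓ' : ℝ) - 1) * (dt : ℝ) - (d gi : ℝ)) * b / (ℓ' : ℝ)) -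
        ((∑ j : Fin η, (dt : ℝ) / (d j : ℝ) * α j) + m / (ℓ' : ℝ)) * Λ θ}

/-!
By Lemma 2, `{A ≥ n x}` is the union over `ℓ ∈ [1, k̃]` of the events that the transmission times
of rounds `ℓ, …, k̃ - 1` together with `T` exceed `n x + (k̃ - ℓ) n b - d_g n b`. Each of these is a
tail event of a sum of i.i.d. variables, bounded by Chernoff's inequality. The rounds
`ℓ, …, k̃ - 1` fit into `ℓ' = ⌈(k̃ - ℓ) / d̃⌉ ≤ k'` blocks of `d̃` rounds, each serving
`∑ j (d̃ / d_j) α_j n` packets, and `Λ ≥ 0` on `θ > 0`; so the Chernoff exponent dominates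
`n γ^{U,ℓ'}(x)`. The union bound over the `k̃` values of `ℓ` gives the claim with `c' = k̃`.
-/

open Finset

-- Distinct `r` counted here are congruent mod `d`, so their quotients `(r - a) / d` differ.
theorem card_filter_dvd_sub_one_Ico_le {d D a K l : ℕ} (hd : 0 < d) (hdD : d ∣ D) (ha : 1 ≤ a)
    (hK : K ≤ a + l * D) : #{r ∈ Ico a K | d ∣ r - 1} ≤ l * (D / d) := by
  calc #{r ∈ Ico a K | d ∣ r - 1} ≤ #(range (l * (D / d))) := by
        refine card_le_card_of_injOn (fun r => (r - a) / d) (fun r hr => ?_) fun r hr r' hr' h => ?_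
        · simp only [coe_filter, mem_Ico, Set.mem_ofPred_eq] at hr
          simp only [coe_range, Set.mem_Iio]
          rw [Nat.div_lt_iff_lt_mul hd, mul_assoc, Nat.div_mul_cancel hdD]
          omega
        · simp only [coe_filter, mem_Ico, Set.mem_ofPred_eq] at hr hr'
          have hmod : (r - a) % d = (r' - a) % d := by
            refine Nat.ModEq.add_right_cancel' (a - 1) ?_
            rw [show r - a + (a - 1) = r - 1 by omega, show r' - a + (a - 1) = r' - 1 by omega]
            exact (Nat.modEq_zero_iff_dvd.2 hr.2).trans (Nat.modEq_zero_iff_dvd.2 hr'.2).symm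
          have := Nat.div_add_mod (r - a) d
          dsimp only at h
          rw [h, hmod, Nat.div_add_mod] at this
          omega
    _ = l * (D / d) := card_range _

theorem sum_Ico_sum_filter_dvd_sub_one_le {η : ℕ} {d : Fin η → ℕ} {D : ℕ} (hd : ∀ g, 0 < d g)
    (hdD : ∀ g, d g ∣ D) {α : Fin η → ℝ} (hα : ∀ g, 0 ≤ α g) {a K l : ℕ} (ha : 1 ≤ a)
    (hK : K ≤ a + l * D) :
    ∑ r ∈ Ico a K, ∑ g with d g ∣ r - 1, α g ≤ l * ∑ g, (D : ℝ) / d g * α g := by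
  have hswap : ∑ r ∈ Ico a K, ∑ g with d g ∣ r - 1, α g =
      ∑ g, (#{r ∈ Ico a K | d g ∣ r - 1} : ℝ) * α g := by
    simp_rw [sum_filter]
    rw [sum_comm]
    simp_rw [← sum_filter, sum_const, nsmul_eq_mul]
  rw [hswap, mul_sum]
  refine sum_le_sum fun g _ => ?_
  rw [← mul_assoc]
  refine mul_le_mul_of_nonneg_right ?_ (hα g)
  rw [← Nat.cast_div (hdD g) (by exact_mod_cast (hd g).ne')]
  exact_mod_cast card_filter_dvd_sub_one_Ico_le (hd g) (hdD g) ha hK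

section RateFunction

theorem le_exp_neg_mul_sSup {P t : ℝ} (hP : 0 ≤ P) (ht : 0 < t) {s : Set ℝ} (hs : s.Nonempty)
    (h : ∀ z ∈ s, P ≤ exp (-(t * z))) : P ≤ exp (-(t * sSup s)) := by
  rcases hP.eq_or_lt with rfl | hP
  · exact (exp_pos _).le
  have hbound : sSup s ≤ -log P / t := csSup_le hs fun z hz => by
    rw [le_div_iff₀ ht]
    linarith [(log_le_iff_le_exp hP).2 (h z hz)]
  rw [← log_le_iff_le_exp hP]
  linarith [(le_div_iff₀ ht).1 hbound]

variable {η : ℕ} {d : Fin η → ℕ} {dt : ℕ} {α : Fin η → ℝ} {b m : ℝ} {Λ : ℝ → ℝ}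

-- In the application `L = K - a` is the length of a busy period `[a, K)` and `w * n` the number
-- of packets it serves; `hL` and `hw` say that `l` blocks of `d̃` rounds cover it.
theorem le_exp_neg_mul_gammaU {P n L w : ℝ} (gi : Fin η) (x : ℝ) (l : ℕ) (hP : 0 ≤ P)
    (hn : 0 < n) (hb : 0 ≤ b) (hΛ : ∀ θ > 0, 0 ≤ Λ θ) (hL0 : 0 ≤ L)
    (hL : ((l : ℝ) - 1) * dt ≤ L) (hw : w ≤ l * ∑ j, (dt : ℝ) / d j * α j)
    (h : ∀ θ > 0, P ≤ exp (-n * (θ * (x + L * b - d gi * b) - (w + m) * Λ θ))) :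
    P ≤ exp (-n * gammaU d dt α b m Λ gi x l) := by
  set C := ∑ j, (dt : ℝ) / d j * α j
  unfold gammaU
  split_ifs with hl
  · subst hl
    rw [neg_mul]
    refine le_exp_neg_mul_sSup hP hn ⟨_, 1, one_pos, rfl⟩ ?_
    rintro z ⟨θ, hθ, rfl⟩
    refine (h θ hθ).trans (exp_le_exp.2 ?_)
    have hLb : 0 ≤ θ * (L * b) := mul_nonneg hθ.le (mul_nonneg hL0 hb)
    have hwΛ : w * Λ θ ≤ 0 := mul_nonpos_of_nonpos_of_nonneg (by simpa using hw) (hΛ θ hθ)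
    have hexp : θ * (x - d gi * b) - m * Λ θ ≤ θ * (x + L * b - d gi * b) - (w + m) * Λ θ := by
      linarith
    linarith [mul_le_mul_of_nonneg_left hexp hn.le]
  · have hl' : (0 : ℝ) < l := Nat.cast_pos.2 (Nat.pos_of_ne_zero hl)
    rw [neg_mul, ← mul_assoc]
    refine le_exp_neg_mul_sSup hP (mul_pos hn hl') ⟨_, 1, one_pos, rfl⟩ ?_
    rintro z ⟨θ, hθ, rfl⟩
    refine (h θ hθ).trans (exp_le_exp.2 ?_)
    have hscale : n * l * (θ * (x / l + ((l - 1) * dt - d gi) * b / l) - (C + m / l) * Λ θ) =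
        n * (θ * (x + ((l - 1) * dt - d gi) * b) - (l * C + m) * Λ θ) := by
      field_simp
    have hLb : 0 ≤ θ * b * (L - (l - 1) * dt) := mul_nonneg (by positivity) (sub_nonneg.2 hL)
    have hwΛ : 0 ≤ (l * C - w) * Λ θ := mul_nonneg (sub_nonneg.2 hw) (hΛ θ hθ)
    have hexp : θ * (x + ((l - 1) * dt - d gi) * b) - (l * C + m) * Λ θ ≤
        θ * (x + L * b - d gi * b) - (w + m) * Λ θ := by
      linarith
    rw [hscale]
    linarith [mul_le_mul_of_nonneg_left hexp hn.le]

end RateFunction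

section Probability

variable {Ω ι κ : Type*} [MeasurableSpace Ω] {μ : Measure Ω}

theorem measureReal_le_sup'_le_sum [IsFiniteMeasure μ] (s : Finset ι) (hs : s.Nonempty)
    (f : ι → Ω → ℝ) (c : Ω → ℝ) :
    μ.real {ω | c ω ≤ s.sup' hs (fun i => f i ω)} ≤ ∑ i ∈ s, μ.real {ω | c ω ≤ f i ω} := by
  refine (measureReal_mono (fun ω hω => ?_) (measure_ne_top _ _)).trans
    (measureReal_biUnion_finset_le _ _)
  simpa only [Set.mem_iUnion, Set.mem_ofPred_eq, le_sup'_iff, exists_prop] using hω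

namespace ProbabilityTheory

theorem one_le_mgf [IsProbabilityMeasure μ] {X : Ω → ℝ} {t : ℝ} (ht : 0 ≤ t)
    (hX : 0 ≤ᵐ[μ] X) (hint : Integrable (fun ω => exp (t * X ω)) μ) : 1 ≤ mgf X μ t :=
  calc (1 : ℝ) = ∫ _, (1 : ℝ) ∂μ := by simp
    _ ≤ mgf X μ t := integral_mono_ae (integrable_const 1) hint <| by
      filter_upwards [hX] with ω hω using one_le_exp (mul_nonneg ht hω)

theorem cgf_nonneg [IsProbabilityMeasure μ] {X : Ω → ℝ} {t : ℝ} (ht : 0 ≤ t)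
    (hX : 0 ≤ᵐ[μ] X) (hint : Integrable (fun ω => exp (t * X ω)) μ) : 0 ≤ cgf X μ t :=
  log_nonneg (one_le_mgf ht hX hint)

theorem iIndepFun.measureReal_sum_ge_le [IsProbabilityMeasure μ] {X : ι → Ω → ℝ} {Y : Ω → ℝ}
    (hmeas : ∀ i, Measurable (X i)) (hindep : iIndepFun X μ)
    (hident : ∀ i, IdentDistrib (X i) Y μ μ) {t : ℝ} (ht : 0 ≤ t)
    (hint : Integrable (fun ω => exp (t * Y ω)) μ) (s : Finset ι) (ε : ℝ) :
    μ.real {ω | ε ≤ ∑ i ∈ s, X i ω} ≤ exp (-t * ε) * mgf Y μ t ^ #s := by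
  have hintX : ∀ i ∈ s, Integrable (fun ω => exp (t * X i ω)) μ := fun i _ =>
    ((hident i).comp (measurable_const_mul t).exp).integrable_iff.2 hint
  have hchernoff := measure_ge_le_exp_mul_mgf ε ht (hindep.integrable_exp_mul_sum hmeas hintX)
  rw [hindep.mgf_sum hmeas,
    prod_eq_pow_card fun i _ => mgf_congr_of_identDistrib _ _ (hident i) t] at hchernoff
  simpa only [Finset.sum_apply] using hchernoff

theorem iIndepFun.measureReal_sum_blocks_ge_le [IsProbabilityMeasure μ] [DecidableEq ι]
    {X : ι → Ω → ℝ} {Y : Ω → ℝ} (hmeas : ∀ i, Measurable (X i)) (hindep : iIndepFun X μ)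
    (hident : ∀ i, IdentDistrib (X i) Y μ μ) {t : ℝ} (ht : 0 ≤ t)
    (hint : Integrable (fun ω => exp (t * Y ω)) μ) {s : Finset κ} {S : κ → Finset ι}
    {T : Finset ι} (hS : (s : Set κ).PairwiseDisjoint S) (hT : ∀ r ∈ s, Disjoint T (S r))
    (ε : ℝ) :
    μ.real {ω | ε ≤ ∑ r ∈ s, ∑ i ∈ S r, X i ω + ∑ i ∈ T, X i ω} ≤
      exp (-t * ε) * mgf Y μ t ^ (∑ r ∈ s, #(S r) + #T) := by
  have hdisj : Disjoint (s.biUnion S) T :=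
    (disjoint_biUnion_left _ _ _).2 fun r hr => (hT r hr).symm
  have := hindep.measureReal_sum_ge_le hmeas hident ht hint (s.biUnion S ∪ T) ε
  simp_rw [sum_union hdisj, sum_biUnion hS, card_union_of_disjoint hdisj, card_biUnion hS]
    at this
  exact this

end ProbabilityTheory

-- One term of the union bound over the start `a` of the busy period in Lemma 2.
theorem measureReal_backlog_ge_le_exp_neg_mul_gammaU [IsProbabilityMeasure μ] {X : ℕ → Ω → ℝ}
    (hmeas : ∀ j, Measurable (X j)) (hindep : iIndepFun X μ)
    (hident : ∀ j, IdentDistrib (X j) (X 0) μ μ) (hnonneg : ∀ j ω, 0 ≤ X j ω)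
    (hmgf : ∀ θ : ℝ, Integrable (fun ω => exp (θ * X 0 ω)) μ)
    {η : ℕ} {d : Fin η → ℕ} {dt : ℕ} (hd : ∀ g, 0 < d g) (hddt : ∀ g, d g ∣ dt) (hdt : 0 < dt)
    {α : Fin η → ℝ} (hα : ∀ g, 0 ≤ α g) {b : ℝ} (hb : 0 ≤ b) (m : ℝ) (gi : Fin η) (x : ℝ)
    {n : ℕ} (hn : 0 < n) {S : ℕ → Finset ℕ} {T : Finset ℕ} {a K : ℕ} (ha : 1 ≤ a)
    (haK : a ≤ K) (hSdisj : ∀ r r', r ≠ r' → Disjoint (S r) (S r'))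
    (hTdisj : ∀ r, Disjoint T (S r))
    (hScard : ∀ r ∈ Ico a K, (#(S r) : ℝ) = ∑ g with d g ∣ r - 1, α g * n)
    (hTcard : (#T : ℝ) = m * n) :
    μ.real {ω | n * x - ∑ j ∈ T, X j ω - d gi * n * b ≤
        ∑ r ∈ Ico a K, ∑ j ∈ S r, X j ω - ((K : ℝ) - a) * n * b} ≤
      exp (-n * gammaU d dt α b m (cgf (X 0) μ) gi x ⌈((K : ℝ) - a) / dt⌉₊) := by
  set l := ⌈((K : ℝ) - a) / dt⌉₊
  set w := ∑ r ∈ Ico a K, ∑ g with d g ∣ r - 1, α g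
  have hdt' : (0 : ℝ) < dt := Nat.cast_pos.2 hdt
  have hKa : (0 : ℝ) ≤ K - a := sub_nonneg.2 (Nat.cast_le.2 haK)
  have hblocks : K ≤ a + l * dt := by
    have := (div_le_iff₀ hdt').1 (Nat.le_ceil (((K : ℝ) - a) / dt))
    exact_mod_cast (by linarith : (K : ℝ) ≤ a + l * dt)
  have hidle : ((l : ℝ) - 1) * dt ≤ K - a := by
    have := Nat.ceil_lt_add_one (div_nonneg hKa hdt'.le)
    exact ((lt_div_iff₀ hdt').1 (by linarith)).le
  have hcard : ((∑ r ∈ Ico a K, #(S r) + #T : ℕ) : ℝ) = n * (w + m) := by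
    push_cast
    rw [sum_congr rfl hScard, hTcard]
    simp_rw [w, ← sum_mul]
    ring
  refine le_exp_neg_mul_gammaU gi x l measureReal_nonneg (Nat.cast_pos.2 hn) hb
    (fun θ hθ => cgf_nonneg hθ.le (ae_of_all _ (hnonneg 0)) (hmgf θ)) hKa hidle
    (sum_Ico_sum_filter_dvd_sub_one_le hd hddt hα ha hblocks) fun θ hθ => ?_
  calc μ.real {ω | n * x - ∑ j ∈ T, X j ω - d gi * n * b ≤
          ∑ r ∈ Ico a K, ∑ j ∈ S r, X j ω - ((K : ℝ) - a) * n * b}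
      = μ.real {ω | n * (x + (K - a) * b - d gi * b) ≤
          ∑ r ∈ Ico a K, ∑ j ∈ S r, X j ω + ∑ j ∈ T, X j ω} := by
        congr 1
        ext ω
        simp only [Set.mem_ofPred_eq]
        constructor <;> intro h <;> linarith
    _ ≤ exp (-θ * (n * (x + (K - a) * b - d gi * b))) *
          mgf (X 0) μ θ ^ (∑ r ∈ Ico a K, #(S r) + #T) :=
        hindep.measureReal_sum_blocks_ge_le hmeas hident hθ.le (hmgf θ)
          (fun r _ r' _ h => hSdisj r r' h) (fun r _ => hTdisj r) _
    _ = exp (-n * (θ * (x + (K - a) * b - d gi * b) - (w + m) * cgf (X 0) μ θ)) := by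
        rw [← exp_log (mgf_pos (hmgf θ)), ← exp_nat_mul, hcard, ← exp_add, cgf]
        ring_nf

end Probability

theorem stmt_3_general {Ω : Type*} [MeasurableSpace Ω] (μ : Measure Ω) [IsProbabilityMeasure μ]
    -- group structure
    (η : ℕ) (hη : 0 < η) (d : Fin η → ℕ) (hd1 : d ⟨0, hη⟩ = 1) (hdmono : StrictMono d)
    (dt : ℕ) (hdt : dt = Finset.univ.lcm d)
    (α : Fin η → ℝ) (hα : ∀ g, 0 < α g)
    (b : ℝ) (hb : 0 < b)
    -- the i.i.d. family of transmission times
    (X : ℕ → Ω → ℝ)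
    (hmeas : ∀ j, Measurable (X j))
    (hindep : iIndepFun X μ)
    (hident : ∀ j, IdentDistrib (X j) (X 0) μ μ)
    (hnonneg : ∀ j ω, 0 ≤ X j ω)
    (hmgf : ∀ θ : ℝ, Integrable (fun ω => Real.exp (θ * X 0 ω)) μ)
    (Λ : ℝ → ℝ) (hΛ : ∀ θ, Λ θ = Real.log (∫ ω, Real.exp (θ * X 0 ω) ∂μ))
    -- the fixed source (group `gi`), update index `k`, packet-position ratio `m`
    (gi : Fin η) (k : ℕ) (m : ℝ)
    -- per-round index sets: for system size `n`, round `r` serves the packets `S n r`,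
    -- and `Tset n` collects the `m n` packets served in round `k̃` up to and including
    -- the `k`-th packet of the tagged source; all these index sets are pairwise disjoint
    (S : ℕ → ℕ → Finset ℕ) (Tset : ℕ → Finset ℕ)
    (hScard : ∀ n, GRRAdmissible α m n → ∀ r, 1 ≤ r →
      ((S n r).card : ℝ) = ∑ g ∈ Finset.univ.filter (fun g => d g ∣ (r - 1)), α g * n)
    (hSdisj : ∀ n r r', r ≠ r' → Disjoint (S n r) (S n r'))
    (hTdisj : ∀ n r, Disjoint (Tset n) (S n r))
    (hTcard : ∀ n, GRRAdmissible α m n → ((Tset n).card : ℝ) = m * n) :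
    -- the statement
    ∀ x > 0, ∀ θ₀ > 0,
      (∑ j : Fin η, ((dt : ℝ) / (d j : ℝ)) * α j * Λ θ₀) - (dt : ℝ) * θ₀ * b < 0 →
      ∃ c' > 0, ∀ n, GRRAdmissible α m n →
        (μ {ω | (n : ℝ) * x ≤
            (Finset.Icc 1 (d gi * (k - 1) + 1)).sup'
                (Finset.nonempty_Icc.mpr (Nat.le_add_left 1 _))
                (fun ℓ => (∑ r ∈ Finset.Ico ℓ (d gi * (k - 1) + 1), ∑ j ∈ S n r, X j ω) -
                  (((d gi * (k - 1) + 1 : ℕ) : ℝ) - (ℓ : ℝ)) * (n : ℝ) * b) +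
              (∑ j ∈ Tset n, X j ω) + (d gi : ℝ) * (n : ℝ) * b}).toReal ≤
          ((dt : ℝ) * c' + 1) *
            Real.exp (-(n : ℝ) *
              (Finset.range (⌈(((d gi * (k - 1) + 1 : ℕ) : ℝ) - 1) / (dt : ℝ)⌉₊ + 1)).inf'
                (Finset.nonempty_range_iff.mpr (Nat.succ_ne_zero _))
                (gammaU d dt α b m Λ gi x)) := by
  intro x _ θ₀ _ _
  have hd : ∀ g, 0 < d g := fun g =>
    one_pos.trans_le (hd1.symm.trans_le (hdmono.monotone (Fin.mk_le_mk.2 (Nat.zero_le g.1))))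
  have hddt : ∀ g, d g ∣ dt := fun g => hdt ▸ dvd_lcm (mem_univ g)
  have hdt0 : 0 < dt := Nat.pos_of_ne_zero (hdt ▸ lcm_ne_zero_iff.2 fun g _ => (hd g).ne')
  obtain rfl : Λ = cgf (X 0) μ := funext hΛ
  set K := d gi * (k - 1) + 1
  set G := (range (⌈((K : ℝ) - 1) / dt⌉₊ + 1)).inf'
    (nonempty_range_iff.mpr (Nat.succ_ne_zero _)) (gammaU d dt α b m (cgf (X 0) μ) gi x)
  refine ⟨K, by positivity, fun n hadm => ?_⟩
  have hterm : ∀ ℓ ∈ Icc 1 K, μ.real {ω | n * x - ∑ j ∈ Tset n, X j ω - d gi * n * b ≤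
      ∑ r ∈ Ico ℓ K, ∑ j ∈ S n r, X j ω - ((K : ℝ) - ℓ) * n * b} ≤ exp (-n * G) := by
    intro ℓ hℓ
    obtain ⟨hℓ1, hℓK⟩ := mem_Icc.1 hℓ
    refine (measureReal_backlog_ge_le_exp_neg_mul_gammaU hmeas hindep hident hnonneg hmgf hd
      hddt hdt0 (fun g => (hα g).le) hb.le m gi x hadm.1 hℓ1 hℓK (hSdisj n)
      (hTdisj n) (fun r hr => hScard n hadm r (hℓ1.trans (mem_Ico.1 hr).1))
      (hTcard n hadm)).trans (exp_le_exp.2 ?_)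
    refine mul_le_mul_of_nonpos_left (inf'_le _ (mem_range.2 (Nat.lt_succ_of_le ?_))) (by simp)
    exact Nat.ceil_mono (by gcongr; exact_mod_cast hℓ1)
  rw [← measureReal_def]
  calc _ ≤ ∑ ℓ ∈ Icc 1 K, exp (-n * G) := by
        refine le_of_eq_of_le ?_ ((measureReal_le_sup'_le_sum _
          (nonempty_Icc.mpr (Nat.le_add_left 1 _)) _ _).trans (sum_le_sum hterm))
        simp only [K, sub_sub, sub_le_iff_le_add, add_assoc]
    _ = K * exp (-n * G) := by simp
    _ ≤ (dt * K + 1) * exp (-n * G) := by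
        gcongr
        nlinarith [(Nat.one_le_cast (α := ℝ)).2 hdt0]

/-- **Theorem 1 of the paper.** Upper bound on the age violation
probability of the `k`-th update of source `(g,i)` under GRR with the infinite packet
queueing (FCFS) discipline, uniformly over admissible system sizes `n`. -/
theorem stmt_3 {Ω : Type*} [MeasurableSpace Ω] (μ : Measure Ω) [IsProbabilityMeasure μ]
    -- group structure
    (η : ℕ) (hη : 0 < η) (d : Fin η → ℕ) (hd1 : d ⟨0, hη⟩ = 1) (hdmono : StrictMono d)
    (dt : ℕ) (hdt : dt = Finset.univ.lcm d)
    (α : Fin η → ℝ) (hα : ∀ g, 0 < α g) (hαsum : ∑ g, α g = 1)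
    (b : ℝ) (hb : 0 < b)
    -- the i.i.d. family of transmission times
    (X : ℕ → Ω → ℝ)
    (hmeas : ∀ j, Measurable (X j))
    (hindep : iIndepFun X μ)
    (hident : ∀ j, IdentDistrib (X j) (X 0) μ μ)
    (hnonneg : ∀ j ω, 0 ≤ X j ω)
    (hmgf : ∀ θ : ℝ, Integrable (fun ω => Real.exp (θ * X 0 ω)) μ)
    (Λ : ℝ → ℝ) (hΛ : ∀ θ, Λ θ = Real.log (∫ ω, Real.exp (θ * X 0 ω) ∂μ))
    -- the fixed source (group `gi`), update index `k`, packet-position ratio `m`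
    (gi : Fin η) (k : ℕ) (hk : 1 ≤ k) (m : ℝ) (hm : 0 < m)
    -- per-round index sets: for system size `n`, round `r` serves the packets `S n r`,
    -- and `Tset n` collects the `m n` packets served in round `k̃` up to and including
    -- the `k`-th packet of the tagged source; all these index sets are pairwise disjoint
    (S : ℕ → ℕ → Finset ℕ) (Tset : ℕ → Finset ℕ)
    (hScard : ∀ n, GRRAdmissible α m n → ∀ r, 1 ≤ r →
      ((S n r).card : ℝ) = ∑ g ∈ Finset.univ.filter (fun g => d g ∣ (r - 1)), α g * n)
    (hSdisj : ∀ n r r', r ≠ r' → Disjoint (S n r) (S n r'))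
    (hTdisj : ∀ n r, Disjoint (Tset n) (S n r))
    (hTcard : ∀ n, GRRAdmissible α m n → ((Tset n).card : ℝ) = m * n) :
    -- the statement
    ∀ x > 0, ∀ θ₀ > 0,
      (∑ j : Fin η, ((dt : ℝ) / (d j : ℝ)) * α j * Λ θ₀) - (dt : ℝ) * θ₀ * b < 0 →
      ∃ c' > 0, ∀ n, GRRAdmissible α m n →
        (μ {ω | (n : ℝ) * x ≤
            (Finset.Icc 1 (d gi * (k - 1) + 1)).sup'
                (Finset.nonempty_Icc.mpr (Nat.le_add_left 1 _))
                (fun ℓ => (∑ r ∈ Finset.Ico ℓ (d gi * (k - 1) + 1), ∑ j ∈ S n r, X j ω) -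
                  (((d gi * (k - 1) + 1 : ℕ) : ℝ) - (ℓ : ℝ)) * (n : ℝ) * b) +
              (∑ j ∈ Tset n, X j ω) + (d gi : ℝ) * (n : ℝ) * b}).toReal ≤
          ((dt : ℝ) * c' + 1) *
            Real.exp (-(n : ℝ) *
              (Finset.range (⌈(((d gi * (k - 1) + 1 : ℕ) : ℝ) - 1) / (dt : ℝ)⌉₊ + 1)).inf'
                (Finset.nonempty_range_iff.mpr (Nat.succ_ne_zero _))
                (gammaU d dt α b m Λ gi x)) :=
  stmt_3_general μ η hη d hd1 hdmono dt hdt α hα b hb X hmeas hindep hident hnonneg hmgf Λ hΛ gi k m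
    S Tset hScard hSdisj hTdisj hTcard
end

section
/- Under the heterogeneous GRR/IPQ setup with, for each update index k ≥ 1, the packet-position ratio m = m(ζ(k)) depending only on the residue ζ(k) ∈ {1, …, d̃/d_g} of k modulo d̃/d_g, and A(k) the corresponding peak age: if there exists θ₀ > 0 with Σ_{j=1}^η (d̃/d_j) α_j Λ(θ₀) − d̃ θ₀ b < 0 and c' > 0 is the constant from the upper bound of Theorem 1, then the long-run fraction of age violation satisfies limsup_{κ→∞} (1/κ) Σ_{k=1}^κ Pr( A(k) ≥ n x ) ≤ Σ_{ζ=1}^{d̃/d_g} (d_g/d̃) (d̃ c' + 1) exp( −n · inf_{ℓ' ≥ 0} γ^{U,ℓ'}(x, ζ) ), where γ^{U,ℓ'}(x, ζ) is the rate function computed with m = m(ζ) and ℓ' ranging over all nonnegative integers. -/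
/-! Theorem 1 bounds the violation probability of update `k` by a quantity that depends on `k`
only through its residue `ζ(k)`, once the infimum of `γ^{U,ℓ'}` over the finitely many `ℓ'`
relevant to `k` is replaced by the infimum over all `ℓ'`. The long-run fraction of violations is
then at most the limsup of the Cesàro means of a `p`-periodic sequence, which is its average over
one period, and the weight `d_g / d̃` in the claimed bound is exactly `1 / p`. -/

open MeasureTheory ProbabilityTheory Real Filter

/-- The peak age of the `k`-th update of the tagged source of group `gi` under GRR/IPQ
(Lemma 2 of the paper), with per-round index sets `S` and within-round index sets `Tset`. -/
noncomputable def peakAgeGRR {Ω : Type*} {η : ℕ} (X : ℕ → Ω → ℝ) (S : ℕ → Finset ℕ)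
    (Tset : ℕ → Finset ℕ) (d : Fin η → ℕ) (gi : Fin η) (n : ℕ) (b : ℝ) (k : ℕ)
    (ω : Ω) : ℝ :=
  (Finset.Icc 1 (d gi * (k - 1) + 1)).sup' (Finset.nonempty_Icc.mpr (Nat.le_add_left 1 _))
      (fun ℓ => (∑ r ∈ Finset.Ico ℓ (d gi * (k - 1) + 1), ∑ j ∈ S r, X j ω) -
        (((d gi * (k - 1) + 1 : ℕ) : ℝ) - (ℓ : ℝ)) * (n : ℝ) * b) +
    (∑ j ∈ Tset k, X j ω) + (d gi : ℝ) * (n : ℝ) * b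

open Finset Function

theorem Function.Periodic.sum_range_mul {M : Type*} [AddCommMonoid M] {g : ℕ → M} {p : ℕ}
    (hg : Periodic g p) (q : ℕ) : ∑ k ∈ range (q * p), g k = q • ∑ k ∈ range p, g k := by
  induction q with
  | zero => simp
  | succ q ih =>
    rw [add_mul, one_mul, sum_range_add, ih, succ_nsmul]
    congr 1
    refine sum_congr rfl fun k _ => ?_
    simpa [add_comm] using hg.nat_mul q k

theorem Function.Periodic.sum_Icc_le {g : ℕ → ℝ} {p : ℕ} (hp : 0 < p) (hg : Periodic g p)
    (hg0 : ∀ k, 0 ≤ g k) (κ : ℕ) :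
    ∑ k ∈ Icc 1 κ, g k ≤ ((κ : ℝ) / p + 1) * ∑ k ∈ range p, g k := by
  have hsub : Icc 1 κ ⊆ range ((κ / p + 1) * p) := fun k hk => by
    have := Nat.lt_div_mul_add (a := κ) hp
    simp only [mem_Icc, mem_range] at hk ⊢
    linarith [add_mul (κ / p) 1 p]
  calc ∑ k ∈ Icc 1 κ, g k ≤ ∑ k ∈ range ((κ / p + 1) * p), g k :=
        sum_le_sum_of_subset_of_nonneg hsub fun k _ _ => hg0 k
    _ = ((κ / p + 1 : ℕ) : ℝ) * ∑ k ∈ range p, g k := by rw [hg.sum_range_mul, nsmul_eq_mul]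
    _ ≤ ((κ : ℝ) / p + 1) * ∑ k ∈ range p, g k := by
        have : ((κ / p : ℕ) : ℝ) ≤ κ / p := Nat.cast_div_le
        gcongr
        · exact sum_nonneg fun k _ => hg0 k
        · push_cast; linarith

theorem limsup_le_of_le_add_inv_mul {a : ℕ → ℝ} {c D : ℝ} (ha0 : ∀ κ, 0 ≤ a κ)
    (ha : ∀ κ, 1 ≤ κ → a κ ≤ c + (κ : ℝ)⁻¹ * D) : limsup a atTop ≤ c := by
  have htend : Tendsto (fun κ : ℕ => c + (κ : ℝ)⁻¹ * D) atTop (nhds c) := by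
    simpa using tendsto_const_nhds.add (tendsto_inv_atTop_nhds_zero_nat.mul_const D)
  calc limsup a atTop ≤ limsup (fun κ : ℕ => c + (κ : ℝ)⁻¹ * D) atTop :=
        limsup_le_limsup (eventually_atTop.2 ⟨1, ha⟩) (isCoboundedUnder_le_of_le atTop ha0)
          htend.isBoundedUnder_le
    _ = c := htend.limsup_eq

theorem Function.Periodic.limsup_cesaro_le {u g : ℕ → ℝ} {p : ℕ} (hp : 0 < p)
    (hg : Periodic g p) (hg0 : ∀ k, 0 ≤ g k) (hu0 : ∀ k, 0 ≤ u k)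
    (hug : ∀ k, 1 ≤ k → u k ≤ g k) :
    limsup (fun κ : ℕ => (κ : ℝ)⁻¹ * ∑ k ∈ Icc 1 κ, u k) atTop ≤
      (p : ℝ)⁻¹ * ∑ k ∈ range p, g k := by
  refine limsup_le_of_le_add_inv_mul (D := ∑ k ∈ range p, g k)
    (fun κ => mul_nonneg (by positivity) (sum_nonneg fun k _ => hu0 k)) fun κ hκ => ?_
  have hκ' : (κ : ℝ) ≠ 0 := by positivity
  calc (κ : ℝ)⁻¹ * ∑ k ∈ Icc 1 κ, u k ≤ (κ : ℝ)⁻¹ * (((κ : ℝ) / p + 1) * ∑ k ∈ range p, g k) := by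
        gcongr
        exact (sum_le_sum fun k hk => hug k (mem_Icc.1 hk).1).trans (hg.sum_Icc_le hp hg0 κ)
    _ = (p : ℝ)⁻¹ * ∑ k ∈ range p, g k + (κ : ℝ)⁻¹ * ∑ k ∈ range p, g k := by
        field_simp

theorem le_mul_exp_neg_mul_sInf_range {f : ℕ → ℝ} {s : Finset ℕ} (hs : s.Nonempty)
    {P C t : ℝ} (hP : P ≤ C * exp (-t * s.inf' hs f)) (hP1 : P ≤ 1) (hC : 1 ≤ C) (ht : 0 ≤ t) :
    P ≤ C * exp (-t * sInf (Set.range f)) := by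
  by_cases hf : BddBelow (Set.range f)
  · obtain ⟨i, -, hi⟩ := s.exists_mem_eq_inf' hs f
    have : sInf (Set.range f) ≤ s.inf' hs f := hi ▸ csInf_le hf ⟨i, rfl⟩
    refine hP.trans (mul_le_mul_of_nonneg_left (exp_le_exp.2 ?_) (by linarith))
    nlinarith
  -- unbounded below, `sInf` takes its junk value `0` and the bound degenerates to `P ≤ C`
  · rw [Real.sInf_of_not_bddBelow hf, mul_zero, exp_zero, mul_one]
    exact hP1.trans hC

theorem stmt_6_general {Ω : Type*} [MeasurableSpace Ω] (μ : Measure Ω) [IsProbabilityMeasure μ]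
    -- group structure
    (η : ℕ) (hη : 0 < η) (d : Fin η → ℕ) (hd1 : d ⟨0, hη⟩ = 1) (hdmono : StrictMono d)
    (dt : ℕ) (hdt : dt = Finset.univ.lcm d)
    (α : Fin η → ℝ)
    (b : ℝ)
    -- the i.i.d. family of transmission times
    (X : ℕ → Ω → ℝ)
    (Λ : ℝ → ℝ)
    -- the tagged group `gi`; `p = d̃ / d_g`, and `ζ k = (k mod p) + 1` is the residue of `k`
    (gi : Fin η) (p : ℕ) (hp : d gi * p = dt)
    -- a fixed admissible system size `n`
    (n : ℕ)
    -- the packet-position ratios, depending only on the residue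
    (mfun : ℕ → ℝ)
    -- per-round and within-round index sets (pairwise disjoint pieces of the i.i.d. family)
    (S : ℕ → Finset ℕ) (Tset : ℕ → Finset ℕ)
    -- the threshold and the stability condition of Theorem 1
    (x : ℝ)
    -- `c'` is the constant from the upper bound of Theorem 1
    (c' : ℝ) (hc' : 0 < c')
    (hbound : ∀ k, 1 ≤ k →
      (μ {ω | (n : ℝ) * x ≤ peakAgeGRR X S Tset d gi n b k ω}).toReal ≤
        ((dt : ℝ) * c' + 1) *
          Real.exp (-(n : ℝ) *
            (Finset.range (⌈(((d gi * (k - 1) + 1 : ℕ) : ℝ) - 1) / (dt : ℝ)⌉₊ + 1)).inf'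
              (Finset.nonempty_range_iff.mpr (Nat.succ_ne_zero _))
              (gammaU d dt α b (mfun (k % p + 1)) Λ gi x))) :
    Filter.atTop.limsup (fun κ : ℕ =>
        (κ : ℝ)⁻¹ * ∑ k ∈ Finset.Icc 1 κ,
          (μ {ω | (n : ℝ) * x ≤ peakAgeGRR X S Tset d gi n b k ω}).toReal) ≤
      ∑ ζ ∈ Finset.Icc 1 p,
        ((d gi : ℝ) / (dt : ℝ)) * ((dt : ℝ) * c' + 1) *
          Real.exp (-(n : ℝ) *
            sInf (Set.range (fun ℓ' : ℕ => gammaU d dt α b (mfun ζ) Λ gi x ℓ'))) := by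
  have hd_pos : ∀ j, 0 < d j := fun j => by
    have := hdmono.monotone (show (⟨0, hη⟩ : Fin η) ≤ j from Nat.zero_le _)
    omega
  have hdt_pos : 0 < dt := by
    rw [hdt, Nat.pos_iff_ne_zero, Ne, Finset.lcm_eq_zero_iff]
    simp [(hd_pos _).ne']
  have hp_pos : 0 < p := Nat.pos_of_mul_pos_left (hp ▸ hdt_pos)
  have hC : 1 ≤ (dt : ℝ) * c' + 1 := le_add_of_nonneg_left (mul_nonneg dt.cast_nonneg hc'.le)
  set B : ℕ → ℝ := fun ζ => ((dt : ℝ) * c' + 1) *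
    Real.exp (-(n : ℝ) * sInf (Set.range (fun ℓ' : ℕ => gammaU d dt α b (mfun ζ) Λ gi x ℓ')))
  have hfrac : (d gi : ℝ) / dt = (p : ℝ)⁻¹ := by
    rw [← hp, Nat.cast_mul, div_mul_cancel_left₀ (by exact_mod_cast (hd_pos gi).ne')]
  have hB_period : ∑ k ∈ range p, B (k % p + 1) = ∑ ζ ∈ Icc 1 p, B ζ :=
    calc ∑ k ∈ range p, B (k % p + 1) = ∑ k ∈ range p, B (k + 1) :=
          sum_congr rfl fun k hk => by rw [Nat.mod_eq_of_lt (mem_range.1 hk)]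
      _ = ∑ ζ ∈ Icc 1 p, B ζ := by
          rw [range_eq_Ico, sum_Ico_add', zero_add, Ico_add_one_right_eq_Icc]
  refine le_of_le_of_eq (Periodic.limsup_cesaro_le (g := fun k => B (k % p + 1)) hp_pos
    (fun k => by simp only [Nat.add_mod_right]) (fun _ => by positivity)
    (fun _ => ENNReal.toReal_nonneg) fun k hk => ?_) ?_
  · exact le_mul_exp_neg_mul_sInf_range _ (hbound k hk) measureReal_le_one hC n.cast_nonneg
  · rw [hB_period, mul_sum]
    exact sum_congr rfl fun ζ _ => by rw [hfrac, mul_assoc]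

/-- **Corollary 2 of the paper.** Long-run fraction of age violation under
GRR/IPQ: with the packet-position ratio depending only on the residue `ζ(k)` of `k` modulo
`d̃/d_g`, and `c'` the constant for which the Theorem 1 upper bound holds, the long-run
fraction of age violation is bounded by
`Σ_{ζ=1}^{d̃/d_g} (d_g/d̃)(d̃ c' + 1) exp(-n inf_{ℓ' ≥ 0} γ^{U,ℓ'}(x, ζ))`. -/
theorem stmt_6 {Ω : Type*} [MeasurableSpace Ω] (μ : Measure Ω) [IsProbabilityMeasure μ]
    -- group structure
    (η : ℕ) (hη : 0 < η) (d : Fin η → ℕ) (hd1 : d ⟨0, hη⟩ = 1) (hdmono : StrictMono d)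
    (dt : ℕ) (hdt : dt = Finset.univ.lcm d)
    (α : Fin η → ℝ) (hα : ∀ g, 0 < α g) (hαsum : ∑ g, α g = 1)
    (b : ℝ) (hb : 0 < b)
    -- the i.i.d. family of transmission times
    (X : ℕ → Ω → ℝ)
    (hmeas : ∀ j, Measurable (X j))
    (hindep : iIndepFun X μ)
    (hident : ∀ j, IdentDistrib (X j) (X 0) μ μ)
    (hnonneg : ∀ j ω, 0 ≤ X j ω)
    (hmgf : ∀ θ : ℝ, Integrable (fun ω => Real.exp (θ * X 0 ω)) μ)
    (Λ : ℝ → ℝ) (hΛ : ∀ θ, Λ θ = Real.log (∫ ω, Real.exp (θ * X 0 ω) ∂μ))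
    -- the tagged group `gi`; `p = d̃ / d_g`, and `ζ k = (k mod p) + 1` is the residue of `k`
    (gi : Fin η) (p : ℕ) (hp : d gi * p = dt)
    -- a fixed admissible system size `n`
    (n : ℕ) (hn : 1 ≤ n) (hadm : ∀ g : Fin η, ∃ j : ℕ, (j : ℝ) = α g * n)
    -- the packet-position ratios, depending only on the residue
    (mfun : ℕ → ℝ) (hmfun : ∀ ζ ∈ Finset.Icc 1 p, 0 < mfun ζ)
    (hmadm : ∀ ζ ∈ Finset.Icc 1 p, ∃ j : ℕ, (j : ℝ) = mfun ζ * n)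
    -- per-round and within-round index sets (pairwise disjoint pieces of the i.i.d. family)
    (S : ℕ → Finset ℕ) (Tset : ℕ → Finset ℕ)
    (hScard : ∀ r, 1 ≤ r →
      ((S r).card : ℝ) = ∑ g ∈ Finset.univ.filter (fun g => d g ∣ (r - 1)), α g * n)
    (hSdisj : ∀ r r', r ≠ r' → Disjoint (S r) (S r'))
    (hTdisj : ∀ k r, Disjoint (Tset k) (S r))
    (hTcard : ∀ k, 1 ≤ k → ((Tset k).card : ℝ) = mfun (k % p + 1) * n)
    -- the threshold and the stability condition of Theorem 1
    (x : ℝ) (hx : 0 < x)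
    (hstab : ∃ θ₀ > 0,
      (∑ j : Fin η, ((dt : ℝ) / (d j : ℝ)) * α j * Λ θ₀) - (dt : ℝ) * θ₀ * b < 0)
    -- `c'` is the constant from the upper bound of Theorem 1
    (c' : ℝ) (hc' : 0 < c')
    (hbound : ∀ k, 1 ≤ k →
      (μ {ω | (n : ℝ) * x ≤ peakAgeGRR X S Tset d gi n b k ω}).toReal ≤
        ((dt : ℝ) * c' + 1) *
          Real.exp (-(n : ℝ) *
            (Finset.range (⌈(((d gi * (k - 1) + 1 : ℕ) : ℝ) - 1) / (dt : ℝ)⌉₊ + 1)).inf'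
              (Finset.nonempty_range_iff.mpr (Nat.succ_ne_zero _))
              (gammaU d dt α b (mfun (k % p + 1)) Λ gi x))) :
    Filter.atTop.limsup (fun κ : ℕ =>
        (κ : ℝ)⁻¹ * ∑ k ∈ Finset.Icc 1 κ,
          (μ {ω | (n : ℝ) * x ≤ peakAgeGRR X S Tset d gi n b k ω}).toReal) ≤
      ∑ ζ ∈ Finset.Icc 1 p,
        ((d gi : ℝ) / (dt : ℝ)) * ((dt : ℝ) * c' + 1) *
          Real.exp (-(n : ℝ) *
            sInf (Set.range (fun ℓ' : ℕ => gammaU d dt α b (mfun ζ) Λ gi x ℓ'))) :=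
  stmt_6_general μ η hη d hd1 hdmono dt hdt α b X Λ gi p hp n mfun S Tset x c' hc' hbound
end
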